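/- For d ≥ 3, b ∈ ℝ^d, and x ∈ ℝ^d \ {0}, the function η₀(x) = e^{⟨b,x⟩}/((d-2) ω_d ‖x‖^{d-2}) satisfies (-Δ + 2b·∇ + κ²) η₀ = 0 on ℝ^d \ {0}, provided κ² + ‖b‖² = 0 (i.e., κ² = -‖b‖²). -/

import Mathlib

/-!
Write `η₀ = e^{⟨b,·⟩} G` with `G = ((d-2) ω_d)⁻¹ (‖·‖²)^{1 - d/2}` the Newtonian potential.
On every line `t ↦ x + t v` one has `(∂ₜ - β)² (e^{βt} g) = e^{βt} g''`, so summing over an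
orthonormal basis gives `(Δ - 2 b·∇ + ‖b‖²)(e^{⟨b,·⟩} G) = e^{⟨b,·⟩} ΔG`. Hence
`(-Δ + 2 b·∇ + κ²) η₀ = (κ² + ‖b‖²) η₀ - e^{⟨b,·⟩} ΔG`, and both terms vanish away from the
origin because `G` is harmonic there.
-/

open Real Filter Topology

open scoped RealInnerProductSpace

theorem deriv_deriv_exp_affine_mul {g : ℝ → ℝ} {c β t₀ : ℝ} (hg : ContDiffAt ℝ 2 g t₀) :
    deriv (deriv fun t => exp (c + β * t) * g t) t₀
        - 2 * β * deriv (fun t => exp (c + β * t) * g t) t₀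
        + β ^ 2 * (exp (c + β * t₀) * g t₀)
      = exp (c + β * t₀) * deriv (deriv g) t₀ := by
  have hexp (t : ℝ) : HasDerivAt (fun t => exp (c + β * t)) (exp (c + β * t) * β) t := by
    simpa using (((hasDerivAt_id t).const_mul β).const_add c).exp
  have hf (t : ℝ) (ht : DifferentiableAt ℝ g t) :
      HasDerivAt (fun t => exp (c + β * t) * g t) (exp (c + β * t) * (β * g t + deriv g t)) t :=
    ((hexp t).mul ht.hasDerivAt).congr_deriv (by ring)
  have hg₁ : ∀ᶠ t in 𝓝 t₀, DifferentiableAt ℝ g t :=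
    (hg.eventually (by simp)).mono fun t ht => ht.differentiableAt (by simp)
  have hg₂ : DifferentiableAt ℝ (deriv g) t₀ :=
    (hg.derivWithin (m := 1) (by norm_num)).differentiableAt (by simp)
  have hderiv : deriv (fun t => exp (c + β * t) * g t)
      =ᶠ[𝓝 t₀] fun t => exp (c + β * t) * (β * g t + deriv g t) :=
    hg₁.mono fun t ht => (hf t ht).deriv
  have hf' : HasDerivAt (fun t => exp (c + β * t) * (β * g t + deriv g t))
      (exp (c + β * t₀) * β * (β * g t₀ + deriv g t₀)
        + exp (c + β * t₀) * (β * deriv g t₀ + deriv (deriv g) t₀)) t₀ :=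
    (hexp t₀).mul ((hg₁.self_of_nhds.hasDerivAt.const_mul β).add hg₂.hasDerivAt)
  rw [hderiv.deriv_eq, hf'.deriv, (hf t₀ hg₁.self_of_nhds).deriv]
  ring

theorem inv_rpow_sub_two_eq_sq_rpow {a : ℝ} (ha : 0 ≤ a) (r : ℝ) :
    (a ^ (r - 2))⁻¹ = (a ^ 2) ^ (1 - r / 2) := by
  rw [← rpow_natCast, ← rpow_mul ha, ← rpow_neg ha]
  congr 1
  push_cast
  ring

variable {E : Type*} [NormedAddCommGroup E] [InnerProductSpace ℝ E]

theorem hasDerivAt_norm_add_smul_sq (x v : E) (t : ℝ) :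
    HasDerivAt (fun t : ℝ => ‖x + t • v‖ ^ 2) (2 * (⟪x, v⟫ + t * ‖v‖ ^ 2)) t := by
  convert (((hasDerivAt_id' t).smul_const v).const_add x).norm_sq using 1
  rw [one_smul, inner_add_left, real_inner_smul_left, real_inner_self_eq_norm_sq]

theorem hasDerivAt_rpow_norm_add_smul_sq {x v : E} {t : ℝ} (s : ℝ) (ht : x + t • v ≠ 0) :
    HasDerivAt (fun t : ℝ => (‖x + t • v‖ ^ 2) ^ s)
      (s * (‖x + t • v‖ ^ 2) ^ (s - 1) * (2 * (⟪x, v⟫ + t * ‖v‖ ^ 2))) t := by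
  convert (hasDerivAt_norm_add_smul_sq x v t).rpow_const (p := s) (Or.inl (by positivity)) using 1
  ring

theorem deriv_deriv_rpow_norm_add_smul_sq {x : E} (hx : x ≠ 0) (v : E) (s : ℝ) :
    deriv (deriv fun t : ℝ => (‖x + t • v‖ ^ 2) ^ s) 0
      = 2 * s * ‖v‖ ^ 2 * (‖x‖ ^ 2) ^ (s - 1)
        + 4 * s * (s - 1) * ⟪x, v⟫ ^ 2 * (‖x‖ ^ 2) ^ (s - 2) := by
  have hne : ∀ᶠ t in 𝓝 (0 : ℝ), x + t • v ≠ 0 :=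
    (Continuous.continuousAt (by fun_prop)).eventually_ne (by simpa using hx)
  have hderiv : deriv (fun t : ℝ => (‖x + t • v‖ ^ 2) ^ s) =ᶠ[𝓝 0]
      fun t => s * (‖x + t • v‖ ^ 2) ^ (s - 1) * (2 * (⟪x, v⟫ + t * ‖v‖ ^ 2)) :=
    hne.mono fun t ht => (hasDerivAt_rpow_norm_add_smul_sq s ht).deriv
  have hderiv' : HasDerivAt
      (fun t => s * (‖x + t • v‖ ^ 2) ^ (s - 1) * (2 * (⟪x, v⟫ + t * ‖v‖ ^ 2)))
      (s * ((s - 1) * (‖x‖ ^ 2) ^ (s - 1 - 1) * (2 * ⟪x, v⟫)) * (2 * ⟪x, v⟫)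
        + s * (‖x‖ ^ 2) ^ (s - 1) * (2 * ‖v‖ ^ 2)) 0 := by
    refine (((hasDerivAt_rpow_norm_add_smul_sq (s - 1) (by simpa using hx)).const_mul s).mul
      ((((hasDerivAt_id' 0).mul_const (‖v‖ ^ 2)).const_add ⟪x, v⟫).const_mul 2)).congr_deriv ?_
    simp
  rw [hderiv.deriv_eq, hderiv'.deriv, show s - 1 - 1 = s - 2 by ring]
  ring

variable {ι : Type*} [Fintype ι]

/-- The Laplacian in the coordinates of `v`, as second derivatives along the coordinate lines,
which is how `Δ` enters the statement. -/
noncomputable def basisLaplacian (v : OrthonormalBasis ι ℝ E) (f : E → ℝ) (x : E) : ℝ :=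
  ∑ i, deriv (deriv fun t : ℝ => f (x + t • v i)) 0

theorem basisLaplacian_const_mul (v : OrthonormalBasis ι ℝ E) (c : ℝ) (f : E → ℝ) (x : E) :
    basisLaplacian v (fun y => c * f y) x = c * basisLaplacian v f x := by
  simp only [basisLaplacian, deriv_const_mul_field', Finset.mul_sum]

theorem basisLaplacian_rpow_norm_sq (v : OrthonormalBasis ι ℝ E) {x : E} (hx : x ≠ 0) (s : ℝ) :
    basisLaplacian v (fun y => (‖y‖ ^ 2) ^ s) x
      = 2 * s * (Fintype.card ι + 2 * (s - 1)) * (‖x‖ ^ 2) ^ (s - 1) := by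
  have hpow : (‖x‖ ^ 2) ^ (s - 1) = ‖x‖ ^ 2 * (‖x‖ ^ 2) ^ (s - 2) := by
    rw [show s - 1 = 1 + (s - 2) by ring, rpow_add (by positivity), rpow_one]
  simp only [basisLaplacian, deriv_deriv_rpow_norm_add_smul_sq hx, v.orthonormal.1,
    Finset.sum_add_distrib, ← Finset.sum_mul, ← Finset.mul_sum, v.sum_sq_inner_left]
  rw [Finset.sum_const, Finset.card_univ, nsmul_eq_mul, hpow]
  ring

theorem basisLaplacian_rpow_norm_sq_eq_zero (v : OrthonormalBasis ι ℝ E) {x : E} (hx : x ≠ 0) :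
    basisLaplacian v (fun y => (‖y‖ ^ 2) ^ (1 - (Fintype.card ι : ℝ) / 2)) x = 0 := by
  rw [basisLaplacian_rpow_norm_sq v hx]
  ring

theorem deriv_deriv_exp_inner_mul_add_smul (b : E) {x : E} (v : E) {G : E → ℝ}
    (hG : ContDiffAt ℝ 2 G x) :
    deriv (deriv fun t : ℝ => exp ⟪b, x + t • v⟫ * G (x + t • v)) 0
        - 2 * ⟪b, v⟫ * lineDeriv ℝ (fun y => exp ⟪b, y⟫ * G y) x v
        + ⟪b, v⟫ ^ 2 * (exp ⟪b, x⟫ * G x)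
      = exp ⟪b, x⟫ * deriv (deriv fun t : ℝ => G (x + t • v)) 0 := by
  have hline : (fun t : ℝ => exp ⟪b, x + t • v⟫ * G (x + t • v))
      = fun t => exp (⟪b, x⟫ + ⟪b, v⟫ * t) * G (x + t • v) := by
    simp only [inner_add_right, real_inner_smul_right, mul_comm]
  have hG' : ContDiffAt ℝ 2 (fun t : ℝ => G (x + t • v)) 0 :=
    ContDiffAt.comp (g := G) 0 (by simpa using hG) (by fun_prop)
  simpa [lineDeriv, hline] using deriv_deriv_exp_affine_mul (c := ⟪b, x⟫) (β := ⟪b, v⟫) hG'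

theorem basisLaplacian_exp_inner_mul (v : OrthonormalBasis ι ℝ E) (b : E) {x : E} {G : E → ℝ}
    (hG : ContDiffAt ℝ 2 G x) :
    basisLaplacian v (fun y => exp ⟪b, y⟫ * G y) x
        - 2 * ∑ i, ⟪b, v i⟫ * lineDeriv ℝ (fun y => exp ⟪b, y⟫ * G y) x (v i)
        + ‖b‖ ^ 2 * (exp ⟪b, x⟫ * G x)
      = exp ⟪b, x⟫ * basisLaplacian v G x := by
  rw [← v.sum_sq_inner_left b, basisLaplacian, basisLaplacian, Finset.mul_sum, Finset.mul_sum, Finset.sum_mul,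
    ← Finset.sum_sub_distrib, ← Finset.sum_add_distrib]
  refine Finset.sum_congr rfl fun i _ => ?_
  rw [← deriv_deriv_exp_inner_mul_add_smul b (v i) hG]
  ring

theorem advection_diffusion_fundamental_general
    (d : ℕ) (b : EuclideanSpace ℝ (Fin d)) (kappaSq : ℝ)
    (hk : kappaSq + ‖b‖ ^ 2 = 0)
    (omega : ℝ)
    (eta : EuclideanSpace ℝ (Fin d) → ℝ)
    (heta : ∀ y : EuclideanSpace ℝ (Fin d),
      eta y = Real.exp (inner ℝ b y) / (((d : ℝ) - 2) * omega * ‖y‖ ^ ((d : ℝ) - 2)))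
    (x : EuclideanSpace ℝ (Fin d)) (hx : x ≠ 0) :
    -(∑ i : Fin d,
        deriv (deriv (fun t : ℝ => eta (x + t • EuclideanSpace.single i (1 : ℝ)))) 0)
      + 2 * (∑ i : Fin d,
          b i * deriv (fun t : ℝ => eta (x + t • EuclideanSpace.single i (1 : ℝ))) 0)
      + kappaSq * eta x = 0 := by
  set G : EuclideanSpace ℝ (Fin d) → ℝ :=
    fun y => (((d : ℝ) - 2) * omega)⁻¹ * (‖y‖ ^ 2) ^ (1 - (d : ℝ) / 2)
  have hηG : eta = fun y => exp ⟪b, y⟫ * G y := by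
    funext y
    rw [heta, div_eq_mul_inv, mul_inv, inv_rpow_sub_two_eq_sq_rpow (norm_nonneg y)]
  have hG : ContDiffAt ℝ 2 G x :=
    contDiffAt_const.mul ((contDiff_norm_sq ℝ).contDiffAt.rpow_const_of_ne (by positivity))
  have hharmonic : basisLaplacian (EuclideanSpace.basisFun (Fin d) ℝ) G x = 0 := by
    have h := basisLaplacian_rpow_norm_sq_eq_zero (EuclideanSpace.basisFun (Fin d) ℝ) hx
    rw [Fintype.card_fin] at h
    rw [basisLaplacian_const_mul, h, mul_zero]
  have hconj := basisLaplacian_exp_inner_mul (EuclideanSpace.basisFun (Fin d) ℝ) b hG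
  rw [hharmonic, mul_zero] at hconj
  subst hηG
  simp only [basisLaplacian, lineDeriv, EuclideanSpace.basisFun_apply,
    EuclideanSpace.inner_single_right, one_mul, conj_trivial] at hconj ⊢
  linear_combination -hconj + exp ⟪b, x⟫ * G x * hk

/-- For `d ≥ 3`, `κ² + ‖b‖² = 0`, the function
`η₀(x) = e^{⟨b,x⟩}/((d-2) ω_d ‖x‖^{d-2})`, with `ω_d = 2π^{d/2}/Γ(d/2)` the surface area
of the unit sphere, satisfies `(-Δ + 2b·∇ + κ²) η₀ = 0` on `ℝ^d \ {0}`. -/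
theorem advection_diffusion_fundamental
    (d : ℕ) (hd : 3 ≤ d) (b : EuclideanSpace ℝ (Fin d)) (kappaSq : ℝ)
    (hk : kappaSq + ‖b‖ ^ 2 = 0)
    (omega : ℝ)
    (homega : omega = 2 * Real.pi ^ ((d : ℝ) / 2) / Real.Gamma ((d : ℝ) / 2))
    (eta : EuclideanSpace ℝ (Fin d) → ℝ)
    (heta : ∀ y : EuclideanSpace ℝ (Fin d),
      eta y = Real.exp (inner ℝ b y) / (((d : ℝ) - 2) * omega * ‖y‖ ^ ((d : ℝ) - 2)))
    (x : EuclideanSpace ℝ (Fin d)) (hx : x ≠ 0) :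
    -(∑ i : Fin d,
        deriv (deriv (fun t : ℝ => eta (x + t • EuclideanSpace.single i (1 : ℝ)))) 0)
      + 2 * (∑ i : Fin d,
          b i * deriv (fun t : ℝ => eta (x + t • EuclideanSpace.single i (1 : ℝ))) 0)
      + kappaSq * eta x = 0 :=
  advection_diffusion_fundamental_general d b kappaSq hk omega eta heta x hx
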